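/- Let X be a topological space with at least 3 points. If for every x ∈ X the subspace X \ {x} is perfectly normal Hausdorff (T₆), then X is T₆. -/

import Mathlib

/-!
Deleting one point `z` from a T₁ space leaves an open subspace `{z}ᶜ`, and an open embedding
carries open sets, separated neighbourhoods and Gδ sets of `{z}ᶜ` to the same objects of `X`.
A closed set `C ≠ univ` misses some point `z`, so it is a Gδ set because it is one in `{z}ᶜ`;
likewise two disjoint closed sets whose union is not `univ` are separated inside some `{z}ᶜ`,
and if their union is `univ` they are complementary clopen sets. The T₁ property itself
survives because with at least three points any two of them lie in a common card.
-/

open Set Topology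

section OpenEmbedding

variable {X Y : Type*} [TopologicalSpace X] [TopologicalSpace Y] {f : X → Y}

theorem SeparatedNhds.image_of_isOpenEmbedding (hf : IsOpenEmbedding f) {s t : Set X}
    (h : SeparatedNhds s t) : SeparatedNhds (f '' s) (f '' t) := by
  obtain ⟨u, v, hu, hv, hsu, htv, huv⟩ := h
  exact ⟨f '' u, f '' v, hf.isOpenMap _ hu, hf.isOpenMap _ hv, image_mono hsu, image_mono htv,
    (disjoint_image_iff hf.injective).2 huv⟩

theorem IsGδ.image_of_isOpenEmbedding (hf : IsOpenEmbedding f) {s : Set X} (hs : IsGδ s) :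
    IsGδ (f '' s) := by
  obtain ⟨g, hg, rfl⟩ := isGδ_iff_eq_iInter_nat.1 hs
  rw [hf.injective.injOn.image_iInter_eq]
  exact .iInter_of_isOpen fun n => hf.isOpenMap _ (hg n)

end OpenEmbedding

theorem image_val_preimage_compl_singleton {X : Type*} {s : Set X} {z : X} (hz : z ∉ s) :
    ((↑) : ({z}ᶜ : Set X) → X) '' ((↑) ⁻¹' s) = s := by
  rw [Subtype.image_preimage_coe, inter_eq_right, subset_compl_singleton_iff]
  exact hz

section Cards

variable {X : Type*} [TopologicalSpace X]

theorem t1Space_of_t1Space_compl_singleton (hcard : 3 ≤ Cardinal.mk X)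
    (h : ∀ x : X, T1Space ({x}ᶜ : Set X)) : T1Space X := by
  rw [t1Space_iff_specializes_imp_eq]
  intro x w hxw
  by_contra hne
  obtain ⟨y, hyx, hyw⟩ := Cardinal.exists_ne_ne_of_three_le hcard x w
  have hxw' : (⟨x, hyx.symm⟩ : ({y}ᶜ : Set X)) ⤳ ⟨w, hyw.symm⟩ :=
    (subtype_specializes_iff _ _).2 hxw
  exact hne (congrArg Subtype.val hxw'.eq)

variable [T1Space X]

theorem normalSpace_of_normalSpace_compl_singleton (h : ∀ x : X, NormalSpace ({x}ᶜ : Set X)) :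
    NormalSpace X := by
  refine ⟨fun s t hs ht hst => ?_⟩
  by_cases hcover : s ∪ t = univ
  · have hst' : IsCompl s t := ⟨hst, codisjoint_iff.2 hcover⟩
    exact ⟨s, t, hst'.symm.compl_eq ▸ ht.isOpen_compl, hst'.compl_eq ▸ hs.isOpen_compl,
      subset_rfl, subset_rfl, hst⟩
  · obtain ⟨z, hz⟩ := (ne_univ_iff_exists_notMem _).1 hcover
    have hsep := (normal_separation (hs.preimage continuous_subtype_val)
      (ht.preimage continuous_subtype_val) (hst.preimage _)).image_of_isOpenEmbedding
      (isOpen_compl_singleton (x := z)).isOpenEmbedding_subtypeVal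
    rwa [image_val_preimage_compl_singleton fun hs => hz (.inl hs),
      image_val_preimage_compl_singleton fun ht => hz (.inr ht)] at hsep

theorem perfectlyNormalSpace_of_perfectlyNormalSpace_compl_singleton
    (h : ∀ x : X, PerfectlyNormalSpace ({x}ᶜ : Set X)) : PerfectlyNormalSpace X where
  toNormalSpace := normalSpace_of_normalSpace_compl_singleton fun x => inferInstance
  closed_gdelta C hC := by
    by_cases hCuniv : C = univ
    · exact hCuniv ▸ .univ
    · obtain ⟨z, hz⟩ := (ne_univ_iff_exists_notMem C).1 hCuniv
      rw [← image_val_preimage_compl_singleton hz]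
      exact (hC.preimage continuous_subtype_val).isGδ.image_of_isOpenEmbedding
        isOpen_compl_singleton.isOpenEmbedding_subtypeVal

end Cards

theorem t6_reconstructible (X : Type*) [TopologicalSpace X]
    (hcard : 3 ≤ Cardinal.mk X)
    (h : ∀ x : X, T6Space ({x}ᶜ : Set X)) : T6Space X := by
  have : T1Space X := t1Space_of_t1Space_compl_singleton hcard fun x => inferInstance
  exact { toPerfectlyNormalSpace :=
    perfectlyNormalSpace_of_perfectlyNormalSpace_compl_singleton fun x => inferInstance }
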